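/- arXiv:2310.09157 — 7 statements merged into one kernel-verified Lean document; each statement's English description precedes it below -/
import Mathlib

section
/- Let d ≥ 1, let f : ℝ^d → ℝ be continuously differentiable with L-Lipschitz-continuous gradient, let R be a full-dimensional hyperrectangle in ℝ^d, let x ∈ R, and let ε > 0. If every point y on the boundary ∂R of R is ε-unreachable from x (i.e., f(y) > f(x) − ε‖x−y‖₂), then R contains an ε-stationary point of f, i.e., there exists z ∈ R with ‖∇f(z)‖₂ ≤ ε. -/
open Filter Topology Set Asymptotics

/-!
The minimizer `z` of `y ↦ f y + ε ‖y - x‖` over the compact box has value at most `f x`, so by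
unreachability it is not a boundary point. Being an interior minimizer, it satisfies
`f z - f y ≤ ε ‖y - z‖` near `z`, and a function that is differentiable at `z` and decreases at
most at rate `ε` away from `z` has derivative of norm at most `ε` there.
-/

theorem EuclideanSpace.isCompact_setOf_forall_mem_Icc {ι : Type*} [Fintype ι] (a b : ι → ℝ) :
    IsCompact {y : EuclideanSpace ℝ ι | ∀ i, a i ≤ y i ∧ y i ≤ b i} := by
  have : {y : EuclideanSpace ℝ ι | ∀ i, a i ≤ y i ∧ y i ≤ b i} =
      EuclideanSpace.equiv ι ℝ ⁻¹' Icc a b := by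
    ext y; simp [Pi.le_def, forall_and]
  rw [this]
  exact (EuclideanSpace.equiv ι ℝ).toHomeomorph.isCompact_preimage.2 isCompact_Icc

theorem HasFDerivAt.norm_le_of_eventually_sub_le {E : Type*} [NormedAddCommGroup E]
    [NormedSpace ℝ E] {f : E → ℝ} {f' : E →L[ℝ] ℝ} {x₀ : E} (hf : HasFDerivAt f f' x₀)
    {C : ℝ} (hC : 0 ≤ C) (hbelow : ∀ᶠ x in 𝓝 x₀, f x₀ - f x ≤ C * ‖x - x₀‖) : ‖f'‖ ≤ C := by
  refine le_of_forall_pos_le_add fun ε hε =>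
    ContinuousLinearMap.opNorm_le_of_nhds_zero (by positivity) ?_
  rw [← map_add_left_nhds_zero x₀, eventually_map] at hbelow
  have hneg : ∀ᶠ y in 𝓝 (0 : E), -f' y ≤ (C + ε) * ‖y‖ := by
    filter_upwards [isLittleO_iff.1 (hasFDerivAt_iff_isLittleO_nhds_zero.1 hf) hε, hbelow]
      with y hlin hy
    rw [add_sub_cancel_left] at hy
    rw [Real.norm_eq_abs, abs_le] at hlin
    linarith [hlin.1]
  -- The one-sided bound at `-y` is the other side of the bound at `y`.
  have hneg' : ∀ᶠ y in 𝓝 (0 : E), -f' (-y) ≤ (C + ε) * ‖-y‖ :=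
    (neg_zero (G := E) ▸ continuous_neg.tendsto (0 : E)).eventually hneg
  filter_upwards [hneg, hneg'] with y h₁ h₂
  rw [map_neg, neg_neg, norm_neg] at h₂
  rw [Real.norm_eq_abs, abs_le]
  constructor <;> linarith

theorem boundary_unreachable_implies_stationary_point_general
    (d : ℕ)
    (f : EuclideanSpace ℝ (Fin d) → ℝ)
    (hf : ContDiff ℝ 1 f)
    (a b : Fin d → ℝ)
    (R : Set (EuclideanSpace ℝ (Fin d)))
    (hR : R = {y | ∀ i, a i ≤ y i ∧ y i ≤ b i})
    (x : EuclideanSpace ℝ (Fin d)) (hx : x ∈ R)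
    (ε : ℝ) (hε : 0 < ε)
    (hunreach : ∀ y ∈ frontier R, f y > f x - ε * ‖x - y‖) :
    ∃ z ∈ R, ‖gradient f z‖ ≤ ε := by
  have hfd : Differentiable ℝ f := hf.differentiable one_ne_zero
  have hRc : IsCompact R := hR ▸ EuclideanSpace.isCompact_setOf_forall_mem_Icc a b
  obtain ⟨z, hzR, hzmin⟩ := hRc.exists_isMinOn ⟨x, hx⟩
    (show Continuous fun y => f y + ε * ‖y - x‖ by fun_prop).continuousOn
  have hzx : f z + ε * ‖z - x‖ ≤ f x := by simpa using hzmin hx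
  have hz_int : z ∈ interior R := by
    by_contra hz
    have := hunreach z ⟨subset_closure hzR, hz⟩
    rw [norm_sub_rev] at this
    linarith
  have hbelow : ∀ᶠ y in 𝓝 z, f z - f y ≤ ε * ‖y - z‖ := by
    filter_upwards [hzmin.isLocalMin (mem_interior_iff_mem_nhds.1 hz_int)] with y hy
    have htri := norm_sub_le_norm_sub_add_norm_sub y z x
    linarith [mul_le_mul_of_nonneg_left htri hε.le]
  refine ⟨z, hzR, ?_⟩
  rw [← (InnerProductSpace.toDual ℝ _).norm_map]
  exact (hfd z).hasGradientAt.hasFDerivAt.norm_le_of_eventually_sub_le hε.le hbelow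

/-- If every point on the boundary of a full-dimensional
hyperrectangle `R` is `ε`-unreachable from `x ∈ R` (for a continuously
differentiable `f : ℝ^d → ℝ` with `L`-Lipschitz gradient), then `R` contains
an `ε`-stationary point of `f`. -/
theorem boundary_unreachable_implies_stationary_point
    (d : ℕ) (hd : 1 ≤ d) (L : ℝ)
    (f : EuclideanSpace ℝ (Fin d) → ℝ)
    (hf : ContDiff ℝ 1 f)
    (hgrad : ∀ x y : EuclideanSpace ℝ (Fin d),
      ‖gradient f x - gradient f y‖ ≤ L * ‖x - y‖)
    (a b : Fin d → ℝ) (hab : ∀ i, a i < b i)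
    (R : Set (EuclideanSpace ℝ (Fin d)))
    (hR : R = {y | ∀ i, a i ≤ y i ∧ y i ≤ b i})
    (x : EuclideanSpace ℝ (Fin d)) (hx : x ∈ R)
    (ε : ℝ) (hε : 0 < ε)
    (hunreach : ∀ y ∈ frontier R, f y > f x - ε * ‖x - y‖) :
    ∃ z ∈ R, ‖gradient f z‖ ≤ ε :=
  boundary_unreachable_implies_stationary_point_general d f hf a b R hR x hx ε hε hunreach
end

section
/- Let d ≥ 1, let f : ℝ^d → ℝ be continuously differentiable with L-Lipschitz-continuous gradient (L > 0), let R = [a₁,b₁] × … × [a_d,b_d] be a full-dimensional hyperrectangle in ℝ^d, let x ∈ R, and let ε > 0. If every point y ∈ ∂R is (ε/2)-unreachable from x, and max_i (b_i − a_i) ≤ ε/(2√d · L), then x is an ε-stationary point of f, i.e., ‖∇f(x)‖₂ ≤ ε. -/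
/-!
If `‖∇f x‖ > ε`, follow the ray from `x` in the direction `-∇f x` until it meets the boundary
of `R`, at some `y` with `t = ‖y - x‖`. The box has diameter at most `ε / (2L)`, so the gradient
moves by at most `L t ≤ ε / 2` along `[x, y]`, and the first-order expansion gives
`f y ≤ f x - t ‖∇f x‖ + L t² < f x - (ε / 2) t`: the boundary point `y` is reachable.
-/

open Bornology InnerProductSpace NNReal
open scoped RealInnerProductSpace Gradient

theorem exists_nonneg_add_smul_mem_frontier {E : Type*} [NormedAddCommGroup E] [NormedSpace ℝ E]
    {s : Set E} (hs : IsBounded s) {x : E} (hx : x ∈ s) {v : E} (hv : v ≠ 0) :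
    ∃ t : ℝ, 0 ≤ t ∧ x + t • v ∈ frontier s := by
  let ray : ℝ≥0 → E := fun t => x + (t : ℝ) • v
  have hray : Continuous ray := by fun_prop
  obtain ⟨r, hr, hsr⟩ := hs.subset_ball_lt 0 x
  have hleave : ray ⁻¹' s ≠ Set.univ := by
    intro h
    let t : ℝ≥0 := ⟨r / ‖v‖, by positivity⟩
    have hdist : dist (ray t) x = r := by
      rw [dist_eq_norm, add_sub_cancel_left, norm_smul, Real.norm_eq_abs, NNReal.abs_eq]
      exact div_mul_cancel₀ r (norm_ne_zero_iff.mpr hv)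
    exact (hsr (Set.eq_univ_iff_forall.mp h t)).ne hdist
  obtain ⟨t, ht⟩ := nonempty_frontier_iff.mpr ⟨⟨0, by simpa [ray] using hx⟩, hleave⟩
  exact ⟨t, t.2, hray.frontier_preimage_subset s ht⟩

theorem abs_sub_sub_inner_gradient_le {E : Type*} [NormedAddCommGroup E] [InnerProductSpace ℝ E]
    [CompleteSpace E] {f : E → ℝ} {L : ℝ} (hL : 0 ≤ L) (hf : Differentiable ℝ f)
    (hgrad : ∀ x y, ‖∇ f x - ∇ f y‖ ≤ L * ‖x - y‖) (x y : E) :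
    |f y - f x - ⟪∇ f x, y - x⟫| ≤ L * ‖y - x‖ ^ 2 := by
  have hbound : ∀ z ∈ segment ℝ x y, ‖fderiv ℝ f z - fderiv ℝ f x‖ ≤ L * ‖y - x‖ := by
    intro z hz
    calc ‖fderiv ℝ f z - fderiv ℝ f x‖ = ‖∇ f z - ∇ f x‖ := by
          rw [← toDual_gradient, ← toDual_gradient, ← map_sub, LinearIsometryEquiv.norm_map]
      _ ≤ L * ‖z - x‖ := hgrad z x
      _ ≤ L * ‖y - x‖ := by gcongr; exact norm_sub_le_of_mem_segment hz
  have := (convex_segment x y).norm_image_sub_le_of_norm_fderiv_le' (fun z _ => hf z) hbound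
    (left_mem_segment ℝ x y) (right_mem_segment ℝ x y)
  rwa [← toDual_gradient, toDual_apply_apply, Real.norm_eq_abs, mul_assoc, ← sq] at this

theorem norm_gradient_le_of_sub_smul_gradient_unreachable {E : Type*} [NormedAddCommGroup E]
    [InnerProductSpace ℝ E] [CompleteSpace E] {f : E → ℝ} {L : ℝ} (hL : 0 ≤ L)
    (hf : Differentiable ℝ f) (hgrad : ∀ x y, ‖∇ f x - ∇ f y‖ ≤ L * ‖x - y‖) {x : E} {t ε : ℝ}
    (ht : 0 ≤ t) (hstep : L * ‖t • ∇ f x‖ ≤ ε / 2)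
    (hreach : f (x - t • ∇ f x) > f x - ε / 2 * ‖t • ∇ f x‖) :
    ‖∇ f x‖ ≤ ε := by
  by_contra! hlarge
  set g := ∇ f x
  have hdescent := (abs_le.mp (abs_sub_sub_inner_gradient_le hL hf hgrad x (x - t • g))).2
  have hnorm : ‖t • g‖ = t * ‖g‖ := by rw [norm_smul, Real.norm_eq_abs, abs_of_nonneg ht]
  rw [sub_sub_cancel_left, norm_neg, inner_neg_right, inner_smul_right,
    real_inner_self_eq_norm_sq] at hdescent
  rw [hnorm] at hstep hreach hdescent
  nlinarith [mul_le_mul_of_nonneg_right hstep (by positivity : 0 ≤ t * ‖g‖),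
    mul_le_mul_of_nonneg_left hlarge.le (by positivity : 0 ≤ t * ‖g‖)]

theorem EuclideanSpace.norm_le_sqrt_card_mul {ι : Type*} [Fintype ι] {v : EuclideanSpace ℝ ι}
    {M : ℝ} (hM : 0 ≤ M) (hv : ∀ i, |v i| ≤ M) : ‖v‖ ≤ √(Fintype.card ι) * M := by
  calc ‖v‖ = √(∑ i, |v i| ^ 2) := by simp [EuclideanSpace.norm_eq]
    _ ≤ √(∑ _ : ι, M ^ 2) := by gcongr with i; exact hv i
    _ = √(Fintype.card ι) * M := by simp [Real.sqrt_mul, hM]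

def hyperrectangle {ι : Type*} (a b : ι → ℝ) : Set (EuclideanSpace ℝ ι) :=
  {y | ∀ i, a i ≤ y i ∧ y i ≤ b i}

theorem isClosed_hyperrectangle {ι : Type*} (a b : ι → ℝ) : IsClosed (hyperrectangle a b) := by
  simp only [hyperrectangle, Set.ofPred_forall, Set.ofPred_and]
  exact isClosed_iInter fun i => (isClosed_le (by fun_prop) (by fun_prop)).inter
    (isClosed_le (by fun_prop) (by fun_prop))

theorem norm_sub_le_of_mem_hyperrectangle {ι : Type*} [Fintype ι] {a b : ι → ℝ} {M : ℝ}
    (hM : 0 ≤ M) (hab : ∀ i, b i - a i ≤ M) {z w : EuclideanSpace ℝ ι}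
    (hz : z ∈ hyperrectangle a b) (hw : w ∈ hyperrectangle a b) :
    ‖z - w‖ ≤ √(Fintype.card ι) * M :=
  EuclideanSpace.norm_le_sqrt_card_mul hM fun i => by
    obtain ⟨⟨hzl, hzu⟩, ⟨hwl, hwu⟩⟩ := And.intro (hz i) (hw i)
    rw [PiLp.sub_apply, abs_sub_le_iff]
    constructor <;> linarith [hab i]

theorem small_box_unreachable_implies_x_stationary_general
    (d : ℕ) (hd : 1 ≤ d) (L : ℝ) (hL : 0 < L)
    (f : EuclideanSpace ℝ (Fin d) → ℝ)
    (hf : ContDiff ℝ 1 f)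
    (hgrad : ∀ x y : EuclideanSpace ℝ (Fin d),
      ‖gradient f x - gradient f y‖ ≤ L * ‖x - y‖)
    (a b : Fin d → ℝ)
    (R : Set (EuclideanSpace ℝ (Fin d)))
    (hR : R = {y | ∀ i, a i ≤ y i ∧ y i ≤ b i})
    (x : EuclideanSpace ℝ (Fin d)) (hx : x ∈ R)
    (ε : ℝ) (hε : 0 < ε)
    (hside : ∀ i, b i - a i ≤ ε / (2 * Real.sqrt d * L))
    (hunreach : ∀ y ∈ frontier R, f y > f x - (ε / 2) * ‖x - y‖) :
    ‖gradient f x‖ ≤ ε := by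
  change R = hyperrectangle a b at hR
  subst hR
  have hsqrt : 0 < √(d : ℝ) := Real.sqrt_pos.mpr (by exact_mod_cast hd)
  have hdiam : ∀ z ∈ hyperrectangle a b, ∀ w ∈ hyperrectangle a b, ‖z - w‖ ≤ ε / (2 * L) :=
    fun z hz w hw => calc
      ‖z - w‖ ≤ √(Fintype.card (Fin d)) * (ε / (2 * √d * L)) :=
        norm_sub_le_of_mem_hyperrectangle (by positivity) hside hz hw
      _ = ε / (2 * L) := by rw [Fintype.card_fin]; field_simp
  have hbdd : IsBounded (hyperrectangle a b) :=
    Metric.isBounded_iff.mpr ⟨_, fun z hz w hw => (dist_eq_norm z w).trans_le (hdiam z hz w hw)⟩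
  by_cases hg : ∇ f x = 0
  · simpa [hg] using hε.le
  obtain ⟨t, ht, hy⟩ := exists_nonneg_add_smul_mem_frontier hbdd hx (neg_ne_zero.mpr hg)
  rw [smul_neg, ← sub_eq_add_neg] at hy
  refine norm_gradient_le_of_sub_smul_gradient_unreachable hL.le
    (hf.differentiable one_ne_zero) hgrad ht ?_ (by simpa using hunreach _ hy)
  calc L * ‖t • ∇ f x‖ = L * ‖x - t • ∇ f x - x‖ := by rw [sub_sub_cancel_left, norm_neg]
    _ ≤ L * (ε / (2 * L)) := by
      gcongr; exact hdiam _ ((isClosed_hyperrectangle a b).frontier_subset hy) x hx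
    _ = ε / 2 := by field_simp

/-- If every boundary point of a small enough full-dimensional
hyperrectangle `R` is `(ε/2)`-unreachable from `x ∈ R`, and each side length is
at most `ε/(2√d·L)`, then `x` itself is an `ε`-stationary point of `f`. -/
theorem small_box_unreachable_implies_x_stationary
    (d : ℕ) (hd : 1 ≤ d) (L : ℝ) (hL : 0 < L)
    (f : EuclideanSpace ℝ (Fin d) → ℝ)
    (hf : ContDiff ℝ 1 f)
    (hgrad : ∀ x y : EuclideanSpace ℝ (Fin d),
      ‖gradient f x - gradient f y‖ ≤ L * ‖x - y‖)
    (a b : Fin d → ℝ) (hab : ∀ i, a i < b i)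
    (R : Set (EuclideanSpace ℝ (Fin d)))
    (hR : R = {y | ∀ i, a i ≤ y i ∧ y i ≤ b i})
    (x : EuclideanSpace ℝ (Fin d)) (hx : x ∈ R)
    (ε : ℝ) (hε : 0 < ε)
    (hside : ∀ i, b i - a i ≤ ε / (2 * Real.sqrt d * L))
    (hunreach : ∀ y ∈ frontier R, f y > f x - (ε / 2) * ‖x - y‖) :
    ‖gradient f x‖ ≤ ε :=
  small_box_unreachable_implies_x_stationary_general d hd L hL f hf hgrad a b R hR x hx ε hε hside
    hunreach
end

section
/- Let d ≥ 2, let R = [a₁,b₁] × … × [a_d,b_d] be a (d−1)-dimensional hyperrectangle in ℝ^d, let δ > 0, and let r be any value satisfying r ≥ max_i (b_i − a_i) and r ≥ 8√d · δ. Then there exists a nice δ-net S of R with |S| ≤ (√d · r/(2δ))^{d−1}. -/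
/-!
Take a product grid. In each non-degenerate coordinate `[a i, b i]` use `⌈L / (2ε)⌉ + 1`
equally spaced points, endpoints included, with `ε = δ / √(d - 1)`: every point of the side is
within half a step, hence within `ε`, of the grid. Since the grid contains the endpoints, rounding
only the free coordinates of a point of a face stays in that face, and the error is at most `ε`
in each of the `d - 1` non-degenerate coordinates, so at most `δ` in norm. The count per side is
`< L √(d - 1) / (2δ) + 2 ≤ √d r / (2δ)`, the last step being where `r ≥ 8√d δ` is needed.
-/

/-- A face of the hyperrectangle `R = ∏ i [a i, b i]` is obtained by fixing
some coordinates to their endpoint values `a i` or `b i` and leaving the others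
free. -/
def IsFace {d : ℕ} (a b : Fin d → ℝ) (F : Set (EuclideanSpace ℝ (Fin d))) : Prop :=
  ∃ σ : Fin d → Option Bool,
    F = {y | ∀ i, (σ i).elim (a i ≤ y i ∧ y i ≤ b i)
      (fun s => y i = if s then b i else a i)}

/-- `S` is a nice `δ`-net of the hyperrectangle `R = ∏ i [a i, b i]`. -/
def IsNiceNet {d : ℕ} (δ : ℝ) (a b : Fin d → ℝ)
    (S : Finset (EuclideanSpace ℝ (Fin d))) : Prop :=
  (∀ z ∈ S, ∀ i, a i ≤ z i ∧ z i ≤ b i) ∧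
  ∀ F : Set (EuclideanSpace ℝ (Fin d)), IsFace a b F →
    ∀ y ∈ F, ∃ z ∈ S, z ∈ F ∧ ‖z - y‖ ≤ δ

open Finset

lemma exists_nat_abs_sub_le_half {x : ℝ} {m : ℕ} (hx0 : 0 ≤ x) (hxm : x ≤ m) :
    ∃ k ≤ m, |(k : ℝ) - x| ≤ 1 / 2 := by
  have hx : 0 ≤ x + 1 / 2 := by positivity
  refine ⟨⌊x + 1 / 2⌋₊, Nat.lt_succ_iff.1 ((Nat.floor_lt hx).2 (by push_cast; linarith)), ?_⟩
  exact abs_sub_le_iff.2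
    ⟨by linarith [Nat.floor_le hx], by linarith [Nat.lt_floor_add_one (x + 1 / 2)]⟩

theorem exists_finset_net_Icc {a b : ℝ} (hab : a ≤ b) {ε : ℝ} (hε : 0 < ε) :
    ∃ T : Finset ℝ, a ∈ T ∧ b ∈ T ∧ (∀ z ∈ T, z ∈ Set.Icc a b) ∧
      (∀ y ∈ Set.Icc a b, ∃ z ∈ T, |z - y| ≤ ε) ∧ #T ≤ ⌈(b - a) / (2 * ε)⌉₊ + 1 := by
  obtain rfl | hlt := hab.eq_or_lt
  · refine ⟨{a}, by simp, by simp, by simp, fun y hy => ⟨a, by simp, ?_⟩, by simp⟩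
    obtain rfl : y = a := by simpa using hy
    simpa using hε.le
  set m := ⌈(b - a) / (2 * ε)⌉₊
  have hm : (0 : ℝ) < m := by simpa [m] using div_pos (sub_pos.2 hlt) (by positivity)
  set h := (b - a) / m
  have hh : 0 < h := div_pos (sub_pos.2 hlt) hm
  have hmh : m * h = b - a := mul_div_cancel₀ _ hm.ne'
  have h_le : h ≤ 2 * ε := by
    rw [div_le_iff₀ hm, mul_comm, ← div_le_iff₀ (by positivity)]
    exact Nat.le_ceil _
  refine ⟨(range (m + 1)).image (fun k : ℕ => a + k * h), mem_image.2 ⟨0, by simp, by simp⟩,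
    mem_image.2 ⟨m, by simp, by rw [hmh]; ring⟩, ?_, ?_, card_image_le.trans (card_range _).le⟩
  · simp only [mem_image, mem_range]
    rintro _ ⟨k, hk, rfl⟩
    have : (k : ℝ) * h ≤ m * h := by gcongr; exact_mod_cast Nat.lt_succ_iff.1 hk
    exact ⟨le_add_of_nonneg_right (mul_nonneg k.cast_nonneg hh.le), by linarith⟩
  · rintro y ⟨hay, hyb⟩
    obtain ⟨k, hkm, hk⟩ := exists_nat_abs_sub_le_half (m := m) (div_nonneg (sub_nonneg.2 hay) hh.le)
      ((div_le_iff₀ hh).2 (by linarith))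
    refine ⟨a + k * h, mem_image.2 ⟨k, mem_range.2 (Nat.lt_succ_of_le hkm), rfl⟩, ?_⟩
    calc |a + k * h - y| = |h * (k - (y - a) / h)| := by congr 1; field_simp; ring
      _ = h * |k - (y - a) / h| := by rw [abs_mul, abs_of_pos hh]
      _ ≤ h * (1 / 2) := by gcongr
      _ ≤ ε := by linarith

lemma exists_mem_face_coord_abs_sub_le {T : Finset ℝ} {α β ε : ℝ} (hε : 0 ≤ ε) (hα : α ∈ T)
    (hβ : β ∈ T) (hT : ∀ z ∈ T, z ∈ Set.Icc α β) (hnet : ∀ y ∈ Set.Icc α β, ∃ z ∈ T, |z - y| ≤ ε)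
    (o : Option Bool) {y : ℝ} (hy : o.elim (α ≤ y ∧ y ≤ β) fun s => y = if s then β else α) :
    ∃ z ∈ T, (o.elim (α ≤ z ∧ z ≤ β) fun s => z = if s then β else α) ∧ |z - y| ≤ ε := by
  cases o with
  | none =>
    obtain ⟨z, hzT, hz⟩ := hnet y hy
    exact ⟨z, hzT, hT z hzT, hz⟩
  | some s =>
    refine ⟨y, ?_, hy, by simpa using hε⟩
    rw [show y = _ from hy]
    cases s <;> assumption

section Box

variable {d : ℕ} {a b : Fin d → ℝ}

lemma IsFace.mem_Icc (hab : ∀ i, a i ≤ b i) {F : Set (EuclideanSpace ℝ (Fin d))}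
    (hF : IsFace a b F) {y : EuclideanSpace ℝ (Fin d)} (hy : y ∈ F) (i : Fin d) :
    y i ∈ Set.Icc (a i) (b i) := by
  obtain ⟨σ, rfl⟩ := hF
  have hyi := hy i
  rcases hσ : σ i with _ | _ | _ <;> simp only [hσ, Option.elim] at hyi
  · exact hyi
  all_goals simp [hyi, hab i]

theorem isNiceNet_image_piFinset (hab : ∀ i, a i ≤ b i) {T : Fin d → Finset ℝ} {ε : ℝ}
    (hε : 0 ≤ ε) (ha : ∀ i, a i ∈ T i) (hb : ∀ i, b i ∈ T i)
    (hT : ∀ i, ∀ z ∈ T i, z ∈ Set.Icc (a i) (b i))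
    (hnet : ∀ i, ∀ y ∈ Set.Icc (a i) (b i), ∃ z ∈ T i, |z - y| ≤ ε) :
    IsNiceNet (√(#{i | a i < b i} : ℕ) * ε) a b ((Fintype.piFinset T).image (WithLp.toLp 2)) := by
  refine ⟨?_, ?_⟩
  · simp only [mem_image, Fintype.mem_piFinset]
    rintro _ ⟨z, hz, rfl⟩ i
    exact hT i _ (hz i)
  rintro F hF y hy
  obtain ⟨σ, rfl⟩ := id hF
  choose z hzT hzF hzy using fun i =>
    exists_mem_face_coord_abs_sub_le hε (ha i) (hb i) (hT i) (hnet i) (σ i) (hy i)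
  refine ⟨WithLp.toLp 2 z, mem_image_of_mem _ (Fintype.mem_piFinset.2 hzT), hzF, ?_⟩
  have hcoord : ∀ i, (z i - y i) ^ 2 ≤ if a i < b i then ε ^ 2 else 0 := by
    intro i
    split_ifs with hlt
    · exact sq_le_sq' (abs_le.1 (hzy i)).1 (abs_le.1 (hzy i)).2
    · have hyi := hF.mem_Icc hab hy i
      have hzi := hT i _ (hzT i)
      have : z i = y i := by
        simp only [Set.mem_Icc] at hyi hzi; linarith [not_lt.1 hlt]
      simp [this]
  rw [EuclideanSpace.norm_eq, ← Real.sqrt_sq (by positivity : 0 ≤ √(#{i | a i < b i} : ℕ) * ε)]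
  apply Real.sqrt_le_sqrt
  calc ∑ i, ‖(WithLp.toLp 2 z - y) i‖ ^ 2 = ∑ i, (z i - y i) ^ 2 := by simp [sq_abs]
    _ ≤ ∑ i, if a i < b i then ε ^ 2 else 0 := sum_le_sum fun i _ => hcoord i
    _ = (√(#{i | a i < b i} : ℕ) * ε) ^ 2 := by
      rw [← sum_filter, sum_const, nsmul_eq_mul, mul_pow, Real.sq_sqrt (Nat.cast_nonneg _)]

end Box

lemma natCeil_add_one_le_sqrt_mul_div {x δ r L : ℝ} (hx : 1 ≤ x) (hδ : 0 < δ) (hL : 0 ≤ L)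
    (hLr : L ≤ r) (hr : 8 * √x * δ ≤ r) :
    (⌈L / (2 * (δ / √(x - 1)))⌉₊ : ℝ) + 1 ≤ √x * r / (2 * δ) := by
  have hs : 0 < √x := Real.sqrt_pos.2 (by linarith)
  have ht : 0 ≤ √(x - 1) := Real.sqrt_nonneg _
  have hts : √(x - 1) ≤ √x := Real.sqrt_le_sqrt (by linarith)
  have hsq : √x ^ 2 - √(x - 1) ^ 2 = 1 := by
    rw [Real.sq_sqrt (by linarith), Real.sq_sqrt (by linarith)]; ring
  -- `(√x - √(x - 1)) (√x + √(x - 1)) = 1` and `√x + √(x - 1) ≤ 2√x`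
  have hgap : 4 * δ ≤ r * (√x - √(x - 1)) := by
    nlinarith [mul_le_mul_of_nonneg_left hts (sub_nonneg.2 hts), mul_nonneg hδ.le hs.le]
  rw [← mul_div_assoc, div_div_eq_mul_div]
  calc (⌈L * √(x - 1) / (2 * δ)⌉₊ : ℝ) + 1 ≤ L * √(x - 1) / (2 * δ) + 2 := by
        linarith [Nat.ceil_lt_add_one (by positivity : 0 ≤ L * √(x - 1) / (2 * δ))]
    _ ≤ r * √(x - 1) / (2 * δ) + 2 := by gcongr
    _ ≤ √x * r / (2 * δ) := by
        rw [div_add' _ _ _ (by positivity), div_le_div_iff_of_pos_right (by positivity)]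
        linarith

/-- A `(d−1)`-dimensional hyperrectangle in `ℝ^d` (`d ≥ 2`)
with side lengths at most `r`, where `r ≥ 8√d·δ`, admits a nice `δ`-net of
cardinality at most `(√d·r/(2δ))^(d−1)`. -/
theorem exists_small_nice_net_codim_one
    (d : ℕ) (hd : 2 ≤ d)
    (a b : Fin d → ℝ) (hab : ∀ i, a i ≤ b i)
    (hdim : Set.ncard {i | a i < b i} = d - 1)
    (δ r : ℝ) (hδ : 0 < δ)
    (hr1 : ∀ i, b i - a i ≤ r)
    (hr2 : 8 * Real.sqrt d * δ ≤ r) :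
    ∃ S : Finset (EuclideanSpace ℝ (Fin d)),
      IsNiceNet δ a b S ∧
      (S.card : ℝ) ≤ (Real.sqrt d * r / (2 * δ)) ^ (d - 1) := by
  have hd2 : (2 : ℝ) ≤ d := by exact_mod_cast hd
  have hcast : ((d - 1 : ℕ) : ℝ) = d - 1 := by rw [Nat.cast_sub (by omega), Nat.cast_one]
  have hsqrt : 0 < √((d : ℝ) - 1) := Real.sqrt_pos.2 (by linarith)
  have hε : 0 < δ / √((d : ℝ) - 1) := div_pos hδ hsqrt
  choose T hTa hTb hTsub hTnet hTcard using fun i => exists_finset_net_Icc (hab i) hε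
  have hk : #{i | a i < b i} = d - 1 := by rw [← hdim, ← Set.ncard_coe_finset]; simp
  refine ⟨(Fintype.piFinset T).image (WithLp.toLp 2), ?_, ?_⟩
  · have hnet := isNiceNet_image_piFinset hab hε.le hTa hTb hTsub hTnet
    rwa [hk, hcast, mul_div_cancel₀ _ hsqrt.ne'] at hnet
  calc (#((Fintype.piFinset T).image (WithLp.toLp 2)) : ℝ) ≤ ∏ i, (#(T i) : ℝ) := by
        exact_mod_cast card_image_le.trans (Fintype.card_piFinset T).le
    _ ≤ ∏ i, if a i < b i then √d * r / (2 * δ) else 1 := by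
        refine prod_le_prod (fun _ _ => by positivity) fun i _ => ?_
        split_ifs with hlt
        · calc (#(T i) : ℝ) ≤ ⌈(b i - a i) / (2 * (δ / √((d : ℝ) - 1)))⌉₊ + 1 := by
                exact_mod_cast hTcard i
            _ ≤ √d * r / (2 * δ) :=
                natCeil_add_one_le_sqrt_mul_div (by linarith) hδ (by linarith [hab i]) (hr1 i) hr2
        · simpa [le_antisymm (hab i) (not_lt.1 hlt)] using hTcard i
    _ = (√d * r / (2 * δ)) ^ (d - 1) := by
        rw [prod_ite, prod_const, prod_const, one_pow, mul_one, hk]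
end

section
/- Let d ≥ 2, let f : ℝ^d → ℝ be continuously differentiable with L-Lipschitz-continuous gradient, let E be a (d−1)-dimensional hyperrectangle in ℝ^d, let δ > 0, and let S be a nice δ-net of E. Let ε > 0 and let x ∈ ℝ^d with ℓ := dist(x, E) = min_{y∈E} ‖x−y‖₂ > 0. If every z ∈ S is ε-unreachable from x, then every y ∈ E is ε′-unreachable from x, where ε′ = ε + (δ²/(2ℓ))·(L + 2ε/ℓ). -/
open scoped RealInnerProductSpace
open Filter Topology

section InnerProduct

variable {H : Type*} [NormedAddCommGroup H] [InnerProductSpace ℝ H]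

lemma norm_sub_le_quadratic_majorant {u : H} (hu : u ≠ 0) (v : H) :
    ‖u - v‖ ≤ ‖u‖ - ⟪u, v⟫ / ‖u‖ + ‖v‖ ^ 2 / (2 * ‖u‖) := by
  have hu' : 0 < ‖u‖ := norm_pos_iff.mpr hu
  have hsq : ‖u - v‖ ^ 2 = ‖u‖ ^ 2 - 2 * ⟪u, v⟫ + ‖v‖ ^ 2 := norm_sub_sq_real u v
  rw [← mul_le_mul_iff_of_pos_left (by positivity : 0 < 2 * ‖u‖)]
  calc 2 * ‖u‖ * ‖u - v‖ ≤ ‖u‖ ^ 2 + ‖u - v‖ ^ 2 := two_mul_le_add_sq _ _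
    _ = 2 * ‖u‖ * (‖u‖ - ⟪u, v⟫ / ‖u‖ + ‖v‖ ^ 2 / (2 * ‖u‖)) := by
      rw [hsq]; field_simp; ring

/-- `y` is `ε`-unreachable from `x` iff `f x < reachCost f ε x y`. -/
noncomputable def reachCost (f : H → ℝ) (ε : ℝ) (x w : H) : ℝ := f w + ε * ‖x - w‖

variable [CompleteSpace H]

lemma HasGradientAt.hasDerivAt_comp_add_smul {f : H → ℝ} {g p v : H} {t : ℝ}
    (hf : HasGradientAt f g (p + t • v)) :
    HasDerivAt (fun s : ℝ => f (p + s • v)) ⟪g, v⟫ t := by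
  have hline : HasDerivAt (fun s : ℝ => p + s • v) v t := by
    simpa using ((hasDerivAt_id t).smul_const v).const_add p
  simpa [Function.comp_def] using hf.hasFDerivAt.comp_hasDerivAt t hline

lemma image_add_le_of_lipschitz_gradient {f : H → ℝ} {L : ℝ} (hf : Differentiable ℝ f)
    (hgrad : ∀ x y, ‖gradient f x - gradient f y‖ ≤ L * ‖x - y‖) (p v : H) :
    f (p + v) ≤ f p + ⟪gradient f p, v⟫ + L / 2 * ‖v‖ ^ 2 := by
  set g : ℝ → ℝ := fun t => f (p + t • v) - ⟪gradient f p, v⟫ * t - L / 2 * ‖v‖ ^ 2 * t ^ 2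
  have hg : ∀ t, HasDerivAt g
      (⟪gradient f (p + t • v) - gradient f p, v⟫ - L * ‖v‖ ^ 2 * t) t := fun t => by
    refine ((((hf (p + t • v)).hasGradientAt.hasDerivAt_comp_add_smul).sub
      ((hasDerivAt_id t).const_mul ⟪gradient f p, v⟫)).sub
      ((hasDerivAt_pow 2 t).const_mul (L / 2 * ‖v‖ ^ 2))).congr_deriv ?_
    rw [inner_sub_left]; push_cast; ring
  have hanti : AntitoneOn g (Set.Icc 0 1) := by
    refine antitoneOn_of_deriv_nonpos (convex_Icc 0 1)
      (fun t _ => (hg t).continuousAt.continuousWithinAt)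
      (fun t _ => (hg t).differentiableAt.differentiableWithinAt) fun t ht => ?_
    rw [interior_Icc] at ht
    have hlip : ‖gradient f (p + t • v) - gradient f p‖ ≤ L * (t * ‖v‖) := by
      simpa [norm_smul, abs_of_pos ht.1] using hgrad (p + t • v) p
    calc deriv g t = ⟪gradient f (p + t • v) - gradient f p, v⟫ - L * ‖v‖ ^ 2 * t := (hg t).deriv
      _ ≤ ‖gradient f (p + t • v) - gradient f p‖ * ‖v‖ - L * ‖v‖ ^ 2 * t := by
        gcongr; exact real_inner_le_norm _ _
      _ ≤ L * (t * ‖v‖) * ‖v‖ - L * ‖v‖ ^ 2 * t := by gcongr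
      _ = 0 := by ring
  have h01 := hanti (Set.left_mem_Icc.mpr zero_le_one) (Set.right_mem_Icc.mpr zero_le_one)
    zero_le_one
  simp only [g, zero_smul, add_zero, one_smul] at h01
  linarith

lemma inner_gradient_eq_of_isLocalMin_reachCost {f : H → ℝ} {ε : ℝ} {x p v : H}
    (hf : DifferentiableAt ℝ f p) (hxp : x ≠ p) (hε : 0 ≤ ε)
    (hmin : IsLocalMin (fun t : ℝ => reachCost f ε x (p + t • v)) 0) :
    ⟪gradient f p, v⟫ = ε * (⟪x - p, v⟫ / ‖x - p‖) := by
  set u := x - p with hu_def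
  have hu : u ≠ 0 := sub_ne_zero.mpr hxp
  set A := ⟪u, v⟫ / ‖u‖
  set B := ‖v‖ ^ 2 / (2 * ‖u‖)
  set h : ℝ → ℝ := fun t => f (p + t • v) + ε * (‖u‖ - t * A + t ^ 2 * B)
  -- `h` majorizes the cost along the line and touches it at `t = 0`.
  have hloc : IsLocalMin h 0 := hmin.mono fun t ht => by
    have hmaj : ‖u - t • v‖ ≤ ‖u‖ - t * A + t ^ 2 * B := by
      convert norm_sub_le_quadratic_majorant hu (t • v) using 2
      · rw [inner_smul_right, mul_div_assoc]
      · rw [norm_smul, mul_pow, Real.norm_eq_abs, sq_abs, mul_div_assoc]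
    have hx : x - (p + t • v) = u - t • v := by rw [hu_def]; abel
    simp only [reachCost, zero_smul, add_zero, hx] at ht
    simp only [h, zero_smul, add_zero, zero_mul, sub_zero, ne_eq, OfNat.ofNat_ne_zero,
      not_false_eq_true, zero_pow]
    nlinarith
  have hline : HasDerivAt (fun t : ℝ => f (p + t • v)) ⟪gradient f p, v⟫ 0 :=
    HasGradientAt.hasDerivAt_comp_add_smul (by simpa using hf.hasGradientAt)
  have hquad : HasDerivAt (fun t : ℝ => ‖u‖ - t * A + t ^ 2 * B) (-A) 0 := by
    refine ((((hasDerivAt_id (0 : ℝ)).mul_const A).const_sub ‖u‖).add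
      ((hasDerivAt_pow 2 (0 : ℝ)).mul_const B)).congr_deriv ?_
    simp
  linarith [hloc.hasDerivAt_eq_zero (hline.add (hquad.const_mul ε))]

lemma reachCost_le_of_inner_gradient_eq {f : H → ℝ} {L ε : ℝ} {x p z : H}
    (hf : Differentiable ℝ f) (hgrad : ∀ x y, ‖gradient f x - gradient f y‖ ≤ L * ‖x - y‖)
    (hε : 0 ≤ ε) (hxp : x ≠ p)
    (hstat : ⟪gradient f p, z - p⟫ = ε * (⟪x - p, z - p⟫ / ‖x - p‖)) :
    reachCost f ε x z ≤ reachCost f ε x p + (L / 2 + ε / (2 * ‖x - p‖)) * ‖z - p‖ ^ 2 := by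
  have hdesc := image_add_le_of_lipschitz_gradient hf hgrad p (z - p)
  have hnorm := norm_sub_le_quadratic_majorant (sub_ne_zero.mpr hxp) (z - p)
  rw [add_sub_cancel, hstat] at hdesc
  rw [sub_sub_sub_cancel_right] at hnorm
  calc f z + ε * ‖x - z‖
      ≤ f p + ε * (⟪x - p, z - p⟫ / ‖x - p‖) + L / 2 * ‖z - p‖ ^ 2 +
        ε * (‖x - p‖ - ⟪x - p, z - p⟫ / ‖x - p‖ + ‖z - p‖ ^ 2 / (2 * ‖x - p‖)) := by gcongr
    _ = f p + ε * ‖x - p‖ + (L / 2 + ε / (2 * ‖x - p‖)) * ‖z - p‖ ^ 2 := by ring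

end InnerProduct

section Box

variable {ι : Type*}

lemma isCompact_box [Fintype ι] (a b : ι → ℝ) :
    IsCompact {y : EuclideanSpace ℝ ι | ∀ i, a i ≤ y i ∧ y i ≤ b i} := by
  have hbox : {y : EuclideanSpace ℝ ι | ∀ i, a i ≤ y i ∧ y i ≤ b i} =
      WithLp.toLp 2 '' Set.Icc a b := by
    ext y
    refine ⟨fun h => ⟨y.ofLp, ⟨fun i => (h i).1, fun i => (h i).2⟩, rfl⟩, ?_⟩
    rintro ⟨y, hy, rfl⟩ i
    exact ⟨hy.1 i, hy.2 i⟩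
  rw [hbox]
  exact isCompact_Icc.image (PiLp.continuous_toLp 2 _)

lemma eventually_add_smul_mem_box [Finite ι] {a b : ι → ℝ} {p v : EuclideanSpace ℝ ι}
    (hp : ∀ i, a i ≤ p i ∧ p i ≤ b i) (hv : ∀ i, v i = 0 ∨ p i ∈ Set.Ioo (a i) (b i)) :
    ∀ᶠ t in 𝓝 (0 : ℝ), ∀ i, a i ≤ (p + t • v) i ∧ (p + t • v) i ≤ b i := by
  refine eventually_all.mpr fun i => ?_
  simp only [PiLp.add_apply, PiLp.smul_apply, smul_eq_mul]
  rcases hv i with h | h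
  · simpa [h] using hp i
  · have hcont : Continuous fun t : ℝ => p i + t * v i := by fun_prop
    have hnear := hcont.continuousAt.eventually_mem (x := 0) (by simpa using Ioo_mem_nhds h.1 h.2)
    exact hnear.mono fun t ht => ⟨ht.1.le, ht.2.le⟩

lemma exists_isFace_mem_eq_or_mem_Ioo {d : ℕ} {a b : Fin d → ℝ} {p : EuclideanSpace ℝ (Fin d)}
    (hp : ∀ i, a i ≤ p i ∧ p i ≤ b i) :
    ∃ F, IsFace a b F ∧ p ∈ F ∧ ∀ z ∈ F, ∀ i, z i = p i ∨ p i ∈ Set.Ioo (a i) (b i) := by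
  refine ⟨_, ⟨fun i => if p i = b i then some true else if p i = a i then some false else none,
    rfl⟩, fun i => ?_, fun z hz i => ?_⟩
  · dsimp only
    split_ifs with hb ha
    · exact hb
    · exact ha
    · exact hp i
  · specialize hz i
    dsimp only at hz
    split_ifs at hz with hb ha
    · exact .inl (hz.trans hb.symm)
    · exact .inl (hz.trans ha.symm)
    · exact .inr ⟨(hp i).1.lt_of_ne (Ne.symm ha), (hp i).2.lt_of_ne hb⟩

end Box

lemma exists_mem_reachCost_le_of_isMinOn {d : ℕ} {L ε δ : ℝ}
    {f : EuclideanSpace ℝ (Fin d) → ℝ} {a b : Fin d → ℝ} {S : Finset (EuclideanSpace ℝ (Fin d))}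
    {x p : EuclideanSpace ℝ (Fin d)} (hf : Differentiable ℝ f)
    (hgrad : ∀ x y, ‖gradient f x - gradient f y‖ ≤ L * ‖x - y‖) (hε : 0 ≤ ε)
    (hS : IsNiceNet δ a b S) (hp : ∀ i, a i ≤ p i ∧ p i ≤ b i)
    (hpmin : IsMinOn (reachCost f ε x) {y | ∀ i, a i ≤ y i ∧ y i ≤ b i} p) (hxp : x ≠ p) :
    ∃ z ∈ S, reachCost f ε x z ≤ reachCost f ε x p + (L / 2 + ε / (2 * ‖x - p‖)) * δ ^ 2 := by
  obtain ⟨F, hF, hpF, hFp⟩ := exists_isFace_mem_eq_or_mem_Ioo hp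
  obtain ⟨z, hzS, hzF, hzp⟩ := hS.2 F hF p hpF
  have hxp_pos : 0 < ‖x - p‖ := norm_pos_iff.mpr (sub_ne_zero.mpr hxp)
  have hL : 0 ≤ L := nonneg_of_mul_nonneg_left ((norm_nonneg _).trans (hgrad x p)) hxp_pos
  have hline : IsLocalMin (fun t : ℝ => reachCost f ε x (p + t • (z - p))) 0 := by
    filter_upwards [eventually_add_smul_mem_box (v := z - p) hp
      fun i => (hFp z hzF i).imp_left fun h => by simp [h]] with t ht
    simpa using hpmin ht
  refine ⟨z, hzS, ?_⟩
  calc reachCost f ε x z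
      ≤ reachCost f ε x p + (L / 2 + ε / (2 * ‖x - p‖)) * ‖z - p‖ ^ 2 :=
        reachCost_le_of_inner_gradient_eq hf hgrad hε hxp
          (inner_gradient_eq_of_isLocalMin_reachCost (hf p) hxp hε hline)
    _ ≤ _ := by gcongr

theorem net_unreachable_implies_face_unreachable_general
    (d : ℕ) (L : ℝ)
    (f : EuclideanSpace ℝ (Fin d) → ℝ)
    (hf : ContDiff ℝ 1 f)
    (hgrad : ∀ x y : EuclideanSpace ℝ (Fin d),
      ‖gradient f x - gradient f y‖ ≤ L * ‖x - y‖)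
    (a b : Fin d → ℝ)
    (E : Set (EuclideanSpace ℝ (Fin d)))
    (hE : E = {y | ∀ i, a i ≤ y i ∧ y i ≤ b i})
    (δ : ℝ)
    (S : Finset (EuclideanSpace ℝ (Fin d))) (hS : IsNiceNet δ a b S)
    (ε : ℝ) (hε : 0 < ε)
    (x : EuclideanSpace ℝ (Fin d)) (ℓ : ℝ)
    (hℓ : ℓ = Metric.infDist x E) (hℓpos : 0 < ℓ)
    (hunreach : ∀ z ∈ S, f z > f x - ε * ‖x - z‖) :
    ∀ y ∈ E, f y > f x - (ε + δ ^ 2 / (2 * ℓ) * (L + 2 * ε / ℓ)) * ‖x - y‖ := by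
  have hEne : E.Nonempty := Set.nonempty_iff_ne_empty.mpr fun h => by
    simp [h, hℓ] at hℓpos
  have hdist : ∀ w ∈ E, ℓ ≤ ‖x - w‖ := fun w hw => by
    rw [hℓ, ← dist_eq_norm]; exact Metric.infDist_le_dist_of_mem hw
  subst hE
  obtain ⟨p, hpE, hpmin⟩ := (isCompact_box a b).exists_isMinOn hEne
    (by unfold reachCost; fun_prop : Continuous (reachCost f ε x)).continuousOn
  have hxp : 0 < ‖x - p‖ := hℓpos.trans_le (hdist p hpE)
  have hL : 0 ≤ L := nonneg_of_mul_nonneg_left ((norm_nonneg _).trans (hgrad x p)) hxp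
  obtain ⟨z, hzS, hz⟩ := exists_mem_reachCost_le_of_isMinOn (hf.differentiable one_ne_zero)
    hgrad hε.le hS hpE hpmin (sub_ne_zero.mp (norm_pos_iff.mp hxp))
  have hfx : f x < reachCost f ε x p + (L / 2 + ε / (2 * ℓ)) * δ ^ 2 := calc
    f x < reachCost f ε x z := by have := hunreach z hzS; unfold reachCost; linarith
    _ ≤ reachCost f ε x p + (L / 2 + ε / (2 * ‖x - p‖)) * δ ^ 2 := hz
    _ ≤ _ := by gcongr; exact hdist p hpE
  intro y hy
  have hpy : reachCost f ε x p ≤ reachCost f ε x y := hpmin hy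
  have hslack : (L / 2 + ε / (2 * ℓ)) * δ ^ 2 ≤ δ ^ 2 / (2 * ℓ) * (L + 2 * ε / ℓ) * ‖x - y‖ := calc
    _ ≤ (L / 2 + ε / ℓ) * δ ^ 2 := by gcongr; linarith
    _ = δ ^ 2 / (2 * ℓ) * (L + 2 * ε / ℓ) * ℓ := by field_simp
    _ ≤ _ := by gcongr; exact hdist y hy
  unfold reachCost at hpy hfx
  linarith

/-- If every point of a nice `δ`-net `S` of a
`(d−1)`-dimensional hyperrectangle `E` is `ε`-unreachable from `x` (where
`ℓ = dist(x, E) > 0`), then every point of `E` is `ε′`-unreachable from `x`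
with `ε′ = ε + (δ²/(2ℓ))(L + 2ε/ℓ)`. -/
theorem net_unreachable_implies_face_unreachable
    (d : ℕ) (hd : 2 ≤ d) (L : ℝ)
    (f : EuclideanSpace ℝ (Fin d) → ℝ)
    (hf : ContDiff ℝ 1 f)
    (hgrad : ∀ x y : EuclideanSpace ℝ (Fin d),
      ‖gradient f x - gradient f y‖ ≤ L * ‖x - y‖)
    (a b : Fin d → ℝ) (hab : ∀ i, a i ≤ b i)
    (hdim : Set.ncard {i | a i < b i} = d - 1)
    (E : Set (EuclideanSpace ℝ (Fin d)))
    (hE : E = {y | ∀ i, a i ≤ y i ∧ y i ≤ b i})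
    (δ : ℝ) (hδ : 0 < δ)
    (S : Finset (EuclideanSpace ℝ (Fin d))) (hS : IsNiceNet δ a b S)
    (ε : ℝ) (hε : 0 < ε)
    (x : EuclideanSpace ℝ (Fin d)) (ℓ : ℝ)
    (hℓ : ℓ = Metric.infDist x E) (hℓpos : 0 < ℓ)
    (hunreach : ∀ z ∈ S, f z > f x - ε * ‖x - z‖) :
    ∀ y ∈ E, f y > f x - (ε + δ ^ 2 / (2 * ℓ) * (L + 2 * ε / ℓ)) * ‖x - y‖ :=
  net_unreachable_implies_face_unreachable_general d L f hf hgrad a b E hE δ S hS ε hε x ℓ hℓ hℓpos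
    hunreach
end

section
/- Let d ≥ 1, let f : ℝ^d → ℝ be continuously differentiable with L-Lipschitz-continuous gradient and f(x) ≥ 0 for all x ∈ ℝ^d. Let x₀ ∈ ℝ^d with f(x₀) > 0 and let ε > 0. Then the hypercube R₀ = {x ∈ ℝ^d : ‖x − x₀‖_∞ ≤ 2f(x₀)/ε} contains an ε-stationary point of f, i.e., there exists z ∈ R₀ with ‖∇f(z)‖₂ ≤ ε. -/
/-!
Suppose no point of the box is `ε`-stationary. Gradient descent from `x₀` with a step size `t`
small compared to `1 / L` lowers `f` by `t ‖∇f‖² / 2` per step while moving by `t ‖∇f‖`; as long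
as `‖∇f‖ > ε`, the decrease of `f` thus pays for `ε / 2` times the distance travelled. Since
`f ≥ 0`, the iterates can travel at most `2 f(x₀) / ε`, so they never leave the Euclidean ball
of that radius (which lies in the box), and each step lowers `f` by at least `t ε² / 2`: after
finitely many steps `f` would be negative.
-/

open Metric InnerProductSpace
open scoped NNReal

theorem exists_mem_closedBall_of_sufficient_decrease {X : Type*} [PseudoMetricSpace X]
    {f : X → ℝ} (hf : ∀ x, 0 ≤ f x) (T : X → X) {P : X → Prop} {c δ : ℝ} (hc : 0 < c)
    (hδ : 0 < δ) (x₀ : X)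
    (hT : ∀ y ∈ closedBall x₀ (f x₀ / c), ¬ P y →
      f (T y) + c * dist (T y) y ≤ f y ∧ f (T y) + δ ≤ f y) :
    ∃ y ∈ closedBall x₀ (f x₀ / c), P y := by
  by_contra! hP
  have orbit (n : ℕ) : c * dist (T^[n] x₀) x₀ ≤ f x₀ - f (T^[n] x₀) ∧
      f (T^[n] x₀) + n * δ ≤ f x₀ := by
    induction n with
    | zero => simp
    | succ n ih =>
      set y := T^[n] x₀
      have hy : y ∈ closedBall x₀ (f x₀ / c) := by
        rw [mem_closedBall, le_div_iff₀' hc]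
        linarith [hf y]
      obtain ⟨hdist, hdrop⟩ := hT y hy (hP y hy)
      have htri : c * dist (T y) x₀ ≤ c * dist (T y) y + c * dist y x₀ := by
        rw [← mul_add]
        exact mul_le_mul_of_nonneg_left (dist_triangle _ _ _) hc.le
      rw [Function.iterate_succ_apply']
      push_cast
      constructor <;> linarith
  obtain ⟨n, hn⟩ := exists_nat_gt (f x₀ / δ)
  rw [div_lt_iff₀ hδ] at hn
  linarith [(orbit n).2, hf (T^[n] x₀)]

section Gradient

variable {F : Type*} [NormedAddCommGroup F] [InnerProductSpace ℝ F] [CompleteSpace F]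
  {f : F → ℝ} {K : ℝ≥0}

theorem image_add_le_of_lipschitzWith_gradient (hf : Differentiable ℝ f)
    (hK : LipschitzWith K (gradient f)) (x v : F) :
    f (x + v) ≤ f x + inner ℝ (gradient f x) v + K * ‖v‖ ^ 2 := by
  have hbound : ∀ z ∈ closedBall x ‖v‖, ‖fderiv ℝ f z - fderiv ℝ f x‖ ≤ K * ‖v‖ := by
    intro z hz
    rw [← toDual_gradient, ← toDual_gradient, ← map_sub, LinearIsometryEquiv.norm_map]
    exact (hK.norm_sub_le z x).trans
      (mul_le_mul_of_nonneg_left (mem_closedBall_iff_norm.mp hz) K.coe_nonneg)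
  have hmvt := (convex_closedBall x ‖v‖).norm_image_sub_le_of_norm_fderiv_le'
    (fun z _ => hf z) hbound (mem_closedBall_self (norm_nonneg v))
    (show x + v ∈ closedBall x ‖v‖ by simp)
  rw [add_sub_cancel_left, ← inner_gradient_left] at hmvt
  linarith [(abs_le.mp (Real.norm_eq_abs _ ▸ hmvt)).2]

theorem image_sub_smul_gradient_add_le (hf : Differentiable ℝ f)
    (hK : LipschitzWith K (gradient f)) {t : ℝ} (ht : 0 ≤ t) (htK : 2 * K * t ≤ 1) (y : F) :
    f (y - t • gradient f y) + t / 2 * ‖gradient f y‖ ^ 2 ≤ f y := by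
  have hdesc := image_add_le_of_lipschitzWith_gradient hf hK y (-(t • gradient f y))
  rw [← sub_eq_add_neg, inner_neg_right, real_inner_smul_right, real_inner_self_eq_norm_sq,
    norm_neg, norm_smul, Real.norm_of_nonneg ht] at hdesc
  have hstep : K * t ^ 2 ≤ t / 2 := by nlinarith
  nlinarith [sq_nonneg ‖gradient f y‖]

theorem exists_norm_gradient_le_of_lipschitzWith_gradient (hf : Differentiable ℝ f)
    (hK : LipschitzWith K (gradient f)) (hf₀ : ∀ x, 0 ≤ f x) (x₀ : F) {ε : ℝ} (hε : 0 < ε) :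
    ∃ z ∈ closedBall x₀ (2 * f x₀ / ε), ‖gradient f z‖ ≤ ε := by
  -- `K + 1` rather than `K`, so that the step size stays positive when `K = 0`.
  set t : ℝ := (2 * (K + 1))⁻¹
  have ht : 0 < t := by positivity
  have htK : 2 * K * t ≤ 1 := by
    rw [← div_eq_mul_inv, div_le_one (by positivity)]
    linarith
  have hradius : f x₀ / (ε / 2) = 2 * f x₀ / ε := by ring
  rw [← hradius]
  refine exists_mem_closedBall_of_sufficient_decrease hf₀ (fun y ↦ y - t • gradient f y)
    (half_pos hε) (by positivity : 0 < t / 2 * ε ^ 2) x₀ fun y _ hy ↦ ?_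
  have hdrop := image_sub_smul_gradient_add_le hf hK ht.le htK y
  rw [not_le] at hy
  rw [dist_eq_norm, sub_sub_cancel_left, norm_neg, norm_smul, Real.norm_of_nonneg ht.le]
  constructor
  · calc f (y - t • gradient f y) + ε / 2 * (t * ‖gradient f y‖)
        = f (y - t • gradient f y) + t / 2 * (ε * ‖gradient f y‖) := by ring
      _ ≤ f (y - t • gradient f y) + t / 2 * ‖gradient f y‖ ^ 2 := by
        gcongr
        rw [sq]
        exact mul_le_mul_of_nonneg_right hy.le (norm_nonneg _)
      _ ≤ f y := hdrop
  · calc f (y - t • gradient f y) + t / 2 * ε ^ 2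
        ≤ f (y - t • gradient f y) + t / 2 * ‖gradient f y‖ ^ 2 := by gcongr
      _ ≤ f y := hdrop

end Gradient

theorem initial_box_contains_stationary_point_general
    (d : ℕ) (L : ℝ)
    (f : EuclideanSpace ℝ (Fin d) → ℝ)
    (hf : ContDiff ℝ 1 f)
    (hgrad : ∀ x y : EuclideanSpace ℝ (Fin d),
      ‖gradient f x - gradient f y‖ ≤ L * ‖x - y‖)
    (hnonneg : ∀ x, 0 ≤ f x)
    (x₀ : EuclideanSpace ℝ (Fin d))
    (ε : ℝ) (hε : 0 < ε) :
    ∃ z : EuclideanSpace ℝ (Fin d),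
      (∀ i, |z i - x₀ i| ≤ 2 * f x₀ / ε) ∧ ‖gradient f z‖ ≤ ε := by
  have hK : LipschitzWith L.toNNReal (gradient f) :=
    LipschitzWith.of_dist_le' fun x y ↦ by simpa only [dist_eq_norm] using hgrad x y
  obtain ⟨z, hz, hgz⟩ := exists_norm_gradient_le_of_lipschitzWith_gradient
    (hf.differentiable one_ne_zero) hK hnonneg x₀ hε
  refine ⟨z, fun i ↦ ?_, hgz⟩
  calc |z i - x₀ i| = ‖(z - x₀) i‖ := by simp
    _ ≤ ‖z - x₀‖ := PiLp.norm_apply_le _ i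
    _ ≤ 2 * f x₀ / ε := mem_closedBall_iff_norm.mp hz

/-- For a nonnegative continuously differentiable `f` with
`L`-Lipschitz gradient and `f(x₀) > 0`, the sup-norm box of radius `2f(x₀)/ε`
around `x₀` contains an `ε`-stationary point of `f`. -/
theorem initial_box_contains_stationary_point
    (d : ℕ) (hd : 1 ≤ d) (L : ℝ)
    (f : EuclideanSpace ℝ (Fin d) → ℝ)
    (hf : ContDiff ℝ 1 f)
    (hgrad : ∀ x y : EuclideanSpace ℝ (Fin d),
      ‖gradient f x - gradient f y‖ ≤ L * ‖x - y‖)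
    (hnonneg : ∀ x, 0 ≤ f x)
    (x₀ : EuclideanSpace ℝ (Fin d)) (hx₀ : 0 < f x₀)
    (ε : ℝ) (hε : 0 < ε) :
    ∃ z : EuclideanSpace ℝ (Fin d),
      (∀ i, |z i - x₀ i| ≤ 2 * f x₀ / ε) ∧ ‖gradient f z‖ ≤ ε :=
  initial_box_contains_stationary_point_general d L f hf hgrad hnonneg x₀ ε hε
end

section
/- Let d ≥ 1, let L > 0, ε > 0, and let f : ℝ^d → ℝ be differentiable and satisfy the Taylor bound |f(y) − f(x) − ⟨∇f(x), y−x⟩| ≤ (L/2)‖y−x‖₂² for all x, y ∈ ℝ^d. Let v ∈ ℝ^d with ‖∇f(v)‖₂ > ε. Then there exist a coordinate index i ∈ {1,…,d} and a sign s ∈ {−1, +1} such that ⟨∇f(v), s·e_i⟩ ≤ −ε/√d, and the point w = v + (ε/(√d·L))·s·e_i satisfies f(w) ≤ f(v) − (ε/(2√d))·‖w − v‖₂. -/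
open scoped RealInnerProductSpace

lemma aux_key (a b c : ℝ) (hb : 0 < b) : a / (2 * b) * c = c * (a / b) / 2 := by
  field_simp

set_option maxHeartbeats 1000000 in
/-- One-step descent guarantee for a coordinate
gradient-descent step: if `‖∇f(v)‖ > ε`, then some signed coordinate direction
`s·eᵢ` satisfies `⟨∇f(v), s·eᵢ⟩ ≤ −ε/√d`, and the step
`w = v + (ε/(√d·L))·s·eᵢ` decreases `f` by at least `(ε/(2√d))‖w − v‖`. -/
theorem coordinate_descent_step
    (d : ℕ) (hd : 1 ≤ d) (L ε : ℝ) (hL : 0 < L) (hε : 0 < ε)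
    (f : EuclideanSpace ℝ (Fin d) → ℝ)
    (hf : Differentiable ℝ f)
    (htaylor : ∀ x y : EuclideanSpace ℝ (Fin d),
      abs (f y - f x - ⟪gradient f x, y - x⟫) ≤ L / 2 * ‖y - x‖ ^ 2)
    (v : EuclideanSpace ℝ (Fin d)) (hv : ε < ‖gradient f v‖) :
    ∃ (i : Fin d) (s : ℝ), (s = 1 ∨ s = -1) ∧
      ⟪gradient f v, s • EuclideanSpace.single i (1 : ℝ)⟫ ≤ -ε / Real.sqrt d ∧
      f (v + (ε / (Real.sqrt d * L)) • (s • EuclideanSpace.single i (1 : ℝ)))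
        ≤ f v - ε / (2 * Real.sqrt d) *
            ‖(v + (ε / (Real.sqrt d * L)) • (s • EuclideanSpace.single i (1 : ℝ))) - v‖ := by
  set g := gradient f v with hg
  have hd0 : (0:ℝ) < d := by exact_mod_cast Nat.lt_of_lt_of_le Nat.zero_lt_one hd
  have hsd : (0:ℝ) < Real.sqrt d := Real.sqrt_pos.2 hd0
  -- find a big coordinate
  have hex : ∃ i : Fin d, ε / Real.sqrt d ≤ |g i| := by
    by_contra h
    push_neg at h
    have hsum : ‖g‖ ^ 2 < ε ^ 2 := by
      have hsq : ‖g‖ ^ 2 = ∑ i, (g i) ^ 2 := by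
        rw [EuclideanSpace.norm_eq, Real.sq_sqrt (by positivity)]; simp
      have hne : (Finset.univ : Finset (Fin d)).Nonempty := by
        simpa using Finset.univ_nonempty_iff.2 (Fin.pos_iff_nonempty.1 hd)
      have : ∑ i, (g i) ^ 2 < ∑ _i : Fin d, ε ^ 2 / d := by
        refine Finset.sum_lt_sum_of_nonempty hne fun i _ => ?_
        have h1 : |g i| < ε / Real.sqrt d := h i
        have := sq_lt_sq' (by linarith [abs_nonneg (g i), neg_abs_le (g i)]) (lt_of_abs_lt h1)
        calc (g i)^2 < (ε / Real.sqrt d)^2 := by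
              nlinarith [abs_nonneg (g i), sq_abs (g i), neg_abs_le (g i), le_abs_self (g i)]
          _ = ε ^ 2 / d := by rw [div_pow, Real.sq_sqrt hd0.le]
      rw [hsq]
      calc ∑ i, (g i) ^ 2 < ∑ _i : Fin d, ε ^ 2 / d := this
        _ = d * (ε ^ 2 / d) := by simp [Finset.sum_const, nsmul_eq_mul]
        _ = ε ^ 2 := by field_simp
    nlinarith [norm_nonneg g]
  obtain ⟨i, hi⟩ := hex
  set s : ℝ := if 0 ≤ g i then -1 else 1 with hs
  have hs1 : s = 1 ∨ s = -1 := by unfold s; split <;> simp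
  have hsg : s * g i = -|g i| := by
    unfold s; split
    · rename_i h; rw [abs_of_nonneg h]; ring
    · rename_i h; rw [abs_of_neg (lt_of_not_ge h)]; ring
  have habs : |s| = 1 := by rcases hs1 with h | h <;> simp [h]
  have hinner1 : ⟪g, EuclideanSpace.single i (1:ℝ)⟫ = g i := by
    rw [EuclideanSpace.inner_single_right]; simp
  have hinner : ⟪g, s • EuclideanSpace.single i (1:ℝ)⟫ = -|g i| := by
    rw [real_inner_smul_right, hinner1, hsg]
  set γ : ℝ := ε / (Real.sqrt d * L) with hγ
  have hγpos : 0 < γ := by positivity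
  have hγL : γ * L = ε / Real.sqrt d := by
    rw [hγ, div_mul_eq_mul_div, div_eq_div_iff (by positivity) hsd.ne']
    ring
  refine ⟨i, s, hs1, ?_, ?_⟩
  · rw [hinner]; rw [neg_div]; linarith
  · set w := v + γ • (s • EuclideanSpace.single i (1:ℝ)) with hw
    have hwv : w - v = γ • (s • EuclideanSpace.single i (1:ℝ)) := by
      rw [hw]; abel
    have hnorm : ‖w - v‖ = γ := by
      rw [hwv, norm_smul, norm_smul, EuclideanSpace.norm_single]
      simp [Real.norm_eq_abs, habs, abs_of_pos hγpos]
    have hinn2 : ⟪g, w - v⟫ = γ * (-|g i|) := by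
      rw [hwv, real_inner_smul_right, hinner]
    have ht := htaylor v w
    rw [abs_le] at ht
    have h2 := ht.2
    rw [← hg, hinn2, hnorm] at h2
    rw [hnorm]
    have hLg : L / 2 * γ ^ 2 = γ * (ε / Real.sqrt d) / 2 := by
      have : γ * (γ * L) = γ * (ε / Real.sqrt d) := by rw [hγL]
      nlinarith [this]
    rw [aux_key ε (Real.sqrt d) γ hsd]
    nlinarith [hγpos, hi]
end

section
/- Let d ≥ 1, let f be continuously differentiable on a neighborhood of [0,1]^d with L-Lipschitz-continuous gradient on [0,1]^d, and define the projected gradient g : [0,1]^d → ℝ^d by g_i(x) = min{0, [∇f(x)]_i} if x_i = 0, g_i(x) = [∇f(x)]_i if 0 < x_i < 1, and g_i(x) = max{0, [∇f(x)]_i} if x_i = 1. Let x, y ∈ [0,1]^d be such that for every coordinate i: x_i = 0 implies y_i = 0, and x_i = 1 implies y_i = 1. Then ‖g(y)‖₂ ≤ ‖g(x)‖₂ + L‖x − y‖₂. In particular, if ε > 0, ‖g(x)‖₂ ≤ ε/2 and ‖x − y‖₂ ≤ ε/(2L), then ‖g(y)‖₂ ≤ ε, i.e., y is an ε-KKT point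 of the minimization of f over [0,1]^d. -/
/-!
Coordinatewise, `g y i` is `∂ᵢf(y)` passed through `min 0`, `max 0` or the identity, according
to whether `y i` is `0`, `1` or interior. The hypothesis on `x` and `y` makes `y i` clamped the
same way as `x i` whenever `x i` is clamped, and all three maps are `1`-Lipschitz; when `x i` is
interior, `|g y i| ≤ |∂ᵢf(y)|` suffices. Hence `|g y i| ≤ |g x i| + |∂ᵢf(x) - ∂ᵢf(y)|`, and the
triangle inequality in `ℓ²` together with the Lipschitz bound on `∇f` gives the estimate.
-/

noncomputable def projectedCoord (t s : ℝ) : ℝ :=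
  if t = 0 then min 0 s else if t = 1 then max 0 s else s

lemma abs_projectedCoord_le_abs (t s : ℝ) : |projectedCoord t s| ≤ |s| := by
  unfold projectedCoord
  split_ifs
  · rcases le_total s 0 with h | h <;> simp [h]
  · rcases le_total s 0 with h | h <;> simp [h, abs_of_nonpos]
  · rfl

lemma abs_projectedCoord_le {s t a b : ℝ} (h0 : s = 0 → t = 0) (h1 : s = 1 → t = 1) :
    |projectedCoord t b| ≤ |projectedCoord s a| + |a - b| := by
  by_cases hs0 : s = 0
  · have hlip : |min 0 b - min 0 a| ≤ |b - a| := by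
      simpa using abs_min_sub_min_le_max 0 b 0 a
    simp only [projectedCoord, hs0, h0 hs0, if_true]
    linarith [abs_sub_abs_le_abs_sub (min 0 b) (min 0 a), abs_sub_comm a b]
  by_cases hs1 : s = 1
  · have hlip : |max 0 b - max 0 a| ≤ |b - a| := by
      simpa using abs_max_sub_max_le_max 0 b 0 a
    simp only [projectedCoord, hs1, h1 hs1, one_ne_zero, if_true, if_false]
    linarith [abs_sub_abs_le_abs_sub (max 0 b) (max 0 a), abs_sub_comm a b]
  rw [show projectedCoord s a = a by simp [projectedCoord, hs0, hs1]]
  linarith [abs_projectedCoord_le_abs t b, abs_sub_abs_le_abs_sub b a, abs_sub_comm a b]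

lemma EuclideanSpace.norm_le_add_of_abs_le {ι : Type*} [Fintype ι]
    {u v w : EuclideanSpace ℝ ι} (h : ∀ i, |v i| ≤ |u i| + |w i|) : ‖v‖ ≤ ‖u‖ + ‖w‖ := by
  let absVec : EuclideanSpace ℝ ι → EuclideanSpace ℝ ι := fun z => WithLp.toLp 2 fun i => |z i|
  have norm_absVec : ∀ z, ‖absVec z‖ = ‖z‖ := fun z => by
    simp only [EuclideanSpace.norm_eq, absVec, Real.norm_eq_abs, abs_abs]
  calc ‖v‖ ≤ ‖absVec u + absVec w‖ := by
        simp only [EuclideanSpace.norm_eq, Real.norm_eq_abs]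
        gcongr √(∑ i, ?_ ^ 2) with i
        exact (h i).trans (le_abs_self _)
    _ ≤ ‖u‖ + ‖w‖ := by simpa only [norm_absVec] using norm_add_le (absVec u) (absVec w)

theorem projected_gradient_stability_general
    (d : ℕ) (L : ℝ) (hL : 0 < L)
    (f : EuclideanSpace ℝ (Fin d) → ℝ)
    (hgrad : ∀ x ∈ {x : EuclideanSpace ℝ (Fin d) | ∀ i, 0 ≤ x i ∧ x i ≤ 1},
      ∀ y ∈ {x : EuclideanSpace ℝ (Fin d) | ∀ i, 0 ≤ x i ∧ x i ≤ 1},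
      ‖gradient f x - gradient f y‖ ≤ L * ‖x - y‖)
    (g : EuclideanSpace ℝ (Fin d) → EuclideanSpace ℝ (Fin d))
    (hg : ∀ x, ∀ i, g x i =
      if x i = 0 then min 0 (gradient f x i)
      else if x i = 1 then max 0 (gradient f x i)
      else gradient f x i)
    (x y : EuclideanSpace ℝ (Fin d))
    (hx : ∀ i, 0 ≤ x i ∧ x i ≤ 1) (hy : ∀ i, 0 ≤ y i ∧ y i ≤ 1)
    (hxy : ∀ i, (x i = 0 → y i = 0) ∧ (x i = 1 → y i = 1)) :
    ‖g y‖ ≤ ‖g x‖ + L * ‖x - y‖ ∧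
    (∀ ε : ℝ, 0 < ε → ‖g x‖ ≤ ε / 2 → ‖x - y‖ ≤ ε / (2 * L) → ‖g y‖ ≤ ε) := by
  have hcoord : ∀ i, |g y i| ≤ |g x i| + |(gradient f x - gradient f y) i| := fun i => by
    rw [hg x, hg y]
    exact abs_projectedCoord_le (hxy i).1 (hxy i).2
  have hstab : ‖g y‖ ≤ ‖g x‖ + L * ‖x - y‖ :=
    (EuclideanSpace.norm_le_add_of_abs_le hcoord).trans (by grw [hgrad x hx y hy])
  refine ⟨hstab, fun ε _ hgx hdist => ?_⟩
  calc ‖g y‖ ≤ ε / 2 + L * (ε / (2 * L)) := by grw [hstab, hgx, hdist]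
    _ = ε := by field_simp; ring

/-- Stability of the projected gradient: if `f` is
continuously differentiable on a neighborhood of `[0,1]^d` with `L`-Lipschitz
gradient there, `g` is its projected gradient, and `y` keeps every coordinate
of `x` that is clamped at `0` or `1` clamped the same way, then
`‖g(y)‖ ≤ ‖g(x)‖ + L‖x − y‖`; in particular if `‖g(x)‖ ≤ ε/2` and
`‖x − y‖ ≤ ε/(2L)` then `y` is an `ε`-KKT point. -/
theorem projected_gradient_stability
    (d : ℕ) (hd : 1 ≤ d) (L : ℝ) (hL : 0 < L)
    (f : EuclideanSpace ℝ (Fin d) → ℝ)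
    (U : Set (EuclideanSpace ℝ (Fin d))) (hU : IsOpen U)
    (hcube : {x : EuclideanSpace ℝ (Fin d) | ∀ i, 0 ≤ x i ∧ x i ≤ 1} ⊆ U)
    (hf : ContDiffOn ℝ 1 f U)
    (hgrad : ∀ x ∈ {x : EuclideanSpace ℝ (Fin d) | ∀ i, 0 ≤ x i ∧ x i ≤ 1},
      ∀ y ∈ {x : EuclideanSpace ℝ (Fin d) | ∀ i, 0 ≤ x i ∧ x i ≤ 1},
      ‖gradient f x - gradient f y‖ ≤ L * ‖x - y‖)
    (g : EuclideanSpace ℝ (Fin d) → EuclideanSpace ℝ (Fin d))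
    (hg : ∀ x, ∀ i, g x i =
      if x i = 0 then min 0 (gradient f x i)
      else if x i = 1 then max 0 (gradient f x i)
      else gradient f x i)
    (x y : EuclideanSpace ℝ (Fin d))
    (hx : ∀ i, 0 ≤ x i ∧ x i ≤ 1) (hy : ∀ i, 0 ≤ y i ∧ y i ≤ 1)
    (hxy : ∀ i, (x i = 0 → y i = 0) ∧ (x i = 1 → y i = 1)) :
    ‖g y‖ ≤ ‖g x‖ + L * ‖x - y‖ ∧
    (∀ ε : ℝ, 0 < ε → ‖g x‖ ≤ ε / 2 → ‖x - y‖ ≤ ε / (2 * L) → ‖g y‖ ≤ ε) :=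
  projected_gradient_stability_general d L hL f hgrad g hg x y hx hy hxy
end
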